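/- Let 𝒳 = (Ω,S) be a thick coherent configuration and Q a set of pairwise commuting parabolics of 𝒳 such that e ⊥ f for all distinct e, f ∈ Q. Then for every e ∈ Q, e ∧ e' = 1_Ω, where e' is the join of all elements of Q other than e. -/

import Mathlib

open Set

def rcomp {Ω : Type*} (r s : Set (Ω × Ω)) : Set (Ω × Ω) :=
  {p | ∃ γ, (p.1, γ) ∈ r ∧ (γ, p.2) ∈ s}

def rconv {Ω : Type*} (r : Set (Ω × Ω)) : Set (Ω × Ω) := {p | (p.2, p.1) ∈ r}

def rdiag (Ω : Type*) : Set (Ω × Ω) := {p | p.1 = p.2}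

def IsEquivRel {Ω : Type*} (e : Set (Ω × Ω)) : Prop :=
  Equivalence (fun a b => (a, b) ∈ e)

/-- The smallest equivalence relation containing `r`. -/
def eqvClosure {Ω : Type*} (r : Set (Ω × Ω)) : Set (Ω × Ω) :=
  ⋂₀ {e | IsEquivRel e ∧ r ⊆ e}

/-- Join of two equivalence relations. -/
def rjoin {Ω : Type*} (e f : Set (Ω × Ω)) : Set (Ω × Ω) := eqvClosure (e ∪ f)

def IsClass {Ω : Type*} (e : Set (Ω × Ω)) (Δ : Set Ω) : Prop :=
  ∃ α, Δ = {β | (α, β) ∈ e}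

def setoidRel {Ω : Type*} (e : Setoid Ω) : Set (Ω × Ω) := {p | e.r p.1 p.2}

/-- The relation induced on the quotient `Ω/e` by a relation `r` on `Ω`. -/
def qmap {Ω : Type*} (e : Setoid Ω) (r : Set (Ω × Ω)) :
    Set (Quotient e × Quotient e) :=
  {p | ∃ a b : Ω, Quotient.mk e a = p.1 ∧ Quotient.mk e b = p.2 ∧ (a, b) ∈ r}

/-- Tensor product of relations. -/
def tensorRel {m : ℕ} {Ω : Fin m → Type*} (s : ∀ i, Set (Ω i × Ω i)) :
    Set ((∀ i, Ω i) × (∀ i, Ω i)) :=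
  {p | ∀ i, (p.1 i, p.2 i) ∈ s i}

def tensor2 {Ω₁ Ω₂ : Type*} (s₁ : Set (Ω₁ × Ω₁)) (s₂ : Set (Ω₂ × Ω₂)) :
    Set ((Ω₁ × Ω₂) × (Ω₁ × Ω₂)) :=
  {p | (p.1.1, p.2.1) ∈ s₁ ∧ (p.1.2, p.2.2) ∈ s₂}

/-- `PP e I` is the join of the equivalence relations `e i`, `i ∈ I`. -/
def PP {Ω : Type*} {m : ℕ} (e : Fin m → Set (Ω × Ω)) (I : Set (Fin m)) :
    Set (Ω × Ω) :=
  eqvClosure (⋃ i ∈ I, e i)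

/-- An atomic Cartesian decomposition, given as a family of equivalence relations. -/
def IsACDfam {Ω : Type*} {m : ℕ} (e : Fin m → Set (Ω × Ω)) : Prop :=
  0 < m ∧ (∀ i, IsEquivRel (e i)) ∧ (∀ i, e i ≠ rdiag Ω) ∧
  (∀ i j, rcomp (e i) (e j) = rcomp (e j) (e i)) ∧
  (∀ i, e i ∩ PP e ({i}ᶜ) = rdiag Ω) ∧
  (∀ i, rjoin (e i) (PP e ({i}ᶜ)) = Set.univ)

/-- Join of a set of relations. -/
def joinAll {Ω : Type*} (B : Set (Set (Ω × Ω))) : Set (Ω × Ω) := eqvClosure (⋃₀ B)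

/-- The `P`-complement of `e`: the join of the members of `P` other than `e`. -/
def pcompl {Ω : Type*} (P : Set (Set (Ω × Ω))) (e : Set (Ω × Ω)) : Set (Ω × Ω) :=
  joinAll (P \ {e})

/-- An atomic Cartesian decomposition, given as a set of equivalence relations. -/
def IsACD {Ω : Type*} (P : Set (Set (Ω × Ω))) : Prop :=
  P.Nonempty ∧ (∀ e ∈ P, IsEquivRel e ∧ e ≠ rdiag Ω) ∧
  (∀ e ∈ P, ∀ f ∈ P, rcomp e f = rcomp f e) ∧
  (∀ e ∈ P, e ∩ pcompl P e = rdiag Ω ∧ rjoin e (pcompl P e) = Set.univ)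

def IsPartitionOf {α : Type*} (P : Set α) (C : Set (Set α)) : Prop :=
  (∀ B ∈ C, B.Nonempty) ∧ (∀ B ∈ C, ∀ B' ∈ C, B ≠ B' → Disjoint B B') ∧ ⋃₀ C = P

/-- A coherent configuration on `Ω`. -/
structure CohCfg (Ω : Type*) where
  S : Set (Set (Ω × Ω))
  empty_not_mem : ∅ ∉ S
  cover : ∀ p : Ω × Ω, ∃ s ∈ S, p ∈ s
  pairwise_disjoint : ∀ s ∈ S, ∀ t ∈ S, s ≠ t → Disjoint s t
  diag_union : ∀ s ∈ S, (s ∩ rdiag Ω).Nonempty → s ⊆ rdiag Ω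
  conv_mem : ∀ s ∈ S, rconv s ∈ S
  inter_const : ∀ r ∈ S, ∀ s ∈ S, ∀ t ∈ S, ∀ p ∈ t, ∀ q ∈ t,
    ({γ : Ω | (p.1, γ) ∈ r ∧ (γ, p.2) ∈ s}).ncard
      = ({γ : Ω | (q.1, γ) ∈ r ∧ (γ, q.2) ∈ s}).ncard

/-- The valency of a basis relation (the common size of the rows over the left support). -/
noncomputable def valency {Ω : Type*} (s : Set (Ω × Ω)) : ℕ :=
  sSup ((fun α => ({β | (α, β) ∈ s} : Set Ω).ncard) '' {α | ∃ β, (α, β) ∈ s})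

def IsThick {Ω : Type*} (X : CohCfg Ω) : Prop :=
  ∀ s ∈ X.S, Disjoint s (rdiag Ω) → ¬(valency s = 1 ∧ valency (rconv s) = 1)

def IsParabolic {Ω : Type*} (X : CohCfg Ω) (e : Set (Ω × Ω)) : Prop :=
  IsEquivRel e ∧ ∀ s ∈ X.S, (s ∩ e).Nonempty → s ⊆ e

def Perp {Ω : Type*} (X : CohCfg Ω) (e f : Set (Ω × Ω)) : Prop :=
  ∀ x ∈ X.S, x ⊆ e → ∀ y ∈ X.S, y ⊆ f → (rcomp x y).Nonempty → rcomp x y ∈ X.S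

def Redundant {Ω : Type*} (X : CohCfg Ω) (s : Set (Ω × Ω)) : Prop :=
  ∃ x ∈ X.S, ∃ y ∈ X.S, Disjoint x (rdiag Ω) ∧ Disjoint y (rdiag Ω) ∧
    s = rcomp x y ∧ eqvClosure x ∩ eqvClosure y = rdiag Ω

/-!
Commuting equivalence relations compose to their join, so the join of `Q \ {e}` is built by
adding its members one at a time, and it suffices to show `e ∩ B c = 1` when `e ∩ B = 1`, where
`B` is the join so far and `c` the new member. Let `(α, β) ∈ e ∩ B c` pass through `γ`, let
`x ⊆ e` be the basis relation containing `(α, β)` and `z ⊆ c` the one containing `(γ, β)`.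
Since `c ⊥ e`, `z x*` is a basis relation; it contains `(γ, α) ∈ B`, hence lies in `B`.
Coherence gives `x ⊆ (z x*)* z`, so `x x* ⊆ e ∩ B = 1`, and symmetrically `x* x ⊆ 1`. Thus `x` and `x*` have valency one, and
thickness forces `x` to be reflexive, i.e. `α = β`.
-/

section Relations

variable {Ω : Type*} {e f g r s : Set (Ω × Ω)}

lemma rcomp_assoc (r s t : Set (Ω × Ω)) : rcomp (rcomp r s) t = rcomp r (rcomp s t) := by
  ext ⟨a, b⟩
  constructor
  · rintro ⟨γ, ⟨δ, h1, h2⟩, h3⟩; exact ⟨δ, h1, γ, h2, h3⟩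
  · rintro ⟨δ, h1, γ, h2, h3⟩; exact ⟨γ, ⟨δ, h1, h2⟩, h3⟩

lemma rcomp_mono {r' s' : Set (Ω × Ω)} (hr : r ⊆ r') (hs : s ⊆ s') :
    rcomp r s ⊆ rcomp r' s' :=
  fun _ ⟨γ, h1, h2⟩ => ⟨γ, hr h1, hs h2⟩

lemma rdiag_rcomp (r : Set (Ω × Ω)) : rcomp (rdiag Ω) r = r := by
  ext ⟨a, b⟩
  constructor
  · rintro ⟨γ, h1 : a = γ, h2⟩; rwa [h1]
  · intro h; exact ⟨a, rfl, h⟩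

lemma rcomp_rdiag (r : Set (Ω × Ω)) : rcomp r (rdiag Ω) = r := by
  ext ⟨a, b⟩
  constructor
  · rintro ⟨γ, h1, h2 : γ = b⟩; rwa [← h2]
  · intro h; exact ⟨b, h, rfl⟩

lemma rcomp_comm_rcomp (hf : rcomp g e = rcomp e g) (hg : rcomp g f = rcomp f g) :
    rcomp g (rcomp e f) = rcomp (rcomp e f) g := by
  rw [← rcomp_assoc, hf, rcomp_assoc, hg, rcomp_assoc]

lemma isEquivRel_rdiag : IsEquivRel (rdiag Ω) :=
  ⟨fun _ => rfl, fun h => Eq.symm h, fun h1 h2 => Eq.trans h1 h2⟩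

namespace IsEquivRel

lemma rdiag_subset (he : IsEquivRel e) : rdiag Ω ⊆ e := by
  rintro ⟨a, b⟩ (rfl : a = b)
  exact he.refl a

lemma subset_rcomp_left (hf : IsEquivRel f) : e ⊆ rcomp e f :=
  fun p hp => ⟨p.2, hp, hf.refl _⟩

lemma subset_rcomp_right (he : IsEquivRel e) : f ⊆ rcomp e f :=
  fun p hp => ⟨p.1, he.refl _, hp⟩

lemma rcomp_self_subset (he : IsEquivRel e) : rcomp e e ⊆ e :=
  fun _ ⟨_, h1, h2⟩ => he.trans h1 h2

lemma rcomp_of_comm (he : IsEquivRel e) (hf : IsEquivRel f) (hef : rcomp e f = rcomp f e) :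
    IsEquivRel (rcomp e f) := by
  refine ⟨fun a => ⟨a, he.refl a, hf.refl a⟩, ?_, ?_⟩
  · rintro a b ⟨γ, h1, h2⟩
    rw [hef]
    exact ⟨γ, hf.symm h2, he.symm h1⟩
  · intro a b c hab hbc
    have hsq : rcomp (rcomp e f) (rcomp e f) ⊆ rcomp e f := calc
      _ = rcomp e (rcomp (rcomp f e) f) := by
        rw [rcomp_assoc, ← rcomp_assoc f]
      _ = rcomp (rcomp e e) (rcomp f f) := by
        rw [← hef, rcomp_assoc, ← rcomp_assoc e e, ← rcomp_assoc]
      _ ⊆ rcomp e f := rcomp_mono he.rcomp_self_subset hf.rcomp_self_subset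
    exact hsq ⟨b, hab, hbc⟩

end IsEquivRel

lemma isEquivRel_eqvClosure (r : Set (Ω × Ω)) : IsEquivRel (eqvClosure r) :=
  ⟨fun a => mem_sInter.2 fun _ he => he.1.refl a,
    fun h => mem_sInter.2 fun e he => he.1.symm (mem_sInter.1 h e he),
    fun h1 h2 => mem_sInter.2 fun e he => he.1.trans (mem_sInter.1 h1 e he) (mem_sInter.1 h2 e he)⟩

lemma subset_eqvClosure (r : Set (Ω × Ω)) : r ⊆ eqvClosure r :=
  fun _ hp => mem_sInter.2 fun _ he => he.2 hp

lemma eqvClosure_subset (he : IsEquivRel e) (hr : r ⊆ e) : eqvClosure r ⊆ e :=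
  sInter_subset_of_mem ⟨he, hr⟩

lemma eqvClosure_mono (h : r ⊆ s) : eqvClosure r ⊆ eqvClosure s :=
  eqvClosure_subset (isEquivRel_eqvClosure s) (h.trans (subset_eqvClosure s))

lemma joinAll_empty : joinAll (∅ : Set (Set (Ω × Ω))) = rdiag Ω :=
  (eqvClosure_subset isEquivRel_rdiag (by simp)).antisymm
    (isEquivRel_eqvClosure _).rdiag_subset

lemma joinAll_insert {F : Set (Set (Ω × Ω))} (hf : IsEquivRel f)
    (hfF : rcomp (joinAll F) f = rcomp f (joinAll F)) :
    joinAll (insert f F) = rcomp (joinAll F) f := by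
  have hJ := isEquivRel_eqvClosure (⋃₀ F)
  have hJ' := isEquivRel_eqvClosure (⋃₀ insert f F)
  apply subset_antisymm
  · refine eqvClosure_subset (hJ.rcomp_of_comm hf hfF) ?_
    rintro p ⟨f', rfl | hf', hp⟩
    · exact hJ.subset_rcomp_right hp
    · exact hf.subset_rcomp_left (subset_eqvClosure _ ⟨f', hf', hp⟩)
  · calc rcomp (joinAll F) f ⊆ rcomp (joinAll (insert f F)) (joinAll (insert f F)) :=
          rcomp_mono (eqvClosure_mono (sUnion_mono (subset_insert f F)))
            ((subset_sUnion_of_mem (mem_insert f F)).trans (subset_eqvClosure _))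
      _ ⊆ joinAll (insert f F) := hJ'.rcomp_self_subset

lemma rcomp_joinAll_comm {F : Set (Set (Ω × Ω))} (hF : F.Finite)
    (hequiv : ∀ f ∈ F, IsEquivRel f) (hcomm : ∀ f ∈ F, ∀ f' ∈ F, rcomp f f' = rcomp f' f)
    (hg : ∀ f ∈ F, rcomp g f = rcomp f g) :
    rcomp g (joinAll F) = rcomp (joinAll F) g := by
  refine Set.Finite.induction_on_subset (motive := fun t _ => ∀ g : Set (Ω × Ω),
    (∀ f ∈ t, rcomp g f = rcomp f g) → rcomp g (joinAll t) = rcomp (joinAll t) g)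
    F hF ?_ ?_ g hg
  · intro g _
    rw [joinAll_empty, rcomp_rdiag, rdiag_rcomp]
  · intro f t hf hts _ ih g hg
    have hft : rcomp f (joinAll t) = rcomp (joinAll t) f :=
      ih f fun f' hf' => hcomm f hf f' (hts hf')
    rw [joinAll_insert (hequiv f hf) hft.symm]
    exact rcomp_comm_rcomp (ih g fun f' hf' => hg f' (mem_insert_of_mem f hf'))
      (hg f (mem_insert f t))

end Relations

lemma valency_eq_one {Ω : Type*} {x : Set (Ω × Ω)} (hne : x.Nonempty)
    (h : rcomp (rconv x) x ⊆ rdiag Ω) : valency x = 1 := by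
  have hrow : ∀ {α β : Ω}, (α, β) ∈ x → {β' | (α, β') ∈ x} = {β} := by
    intro α β hβ
    ext β'
    exact ⟨fun hβ' => (h (show (β, β') ∈ rcomp (rconv x) x from ⟨α, hβ, hβ'⟩)).symm,
      fun h' => h' ▸ hβ⟩
  have himg : (fun α => ({β | (α, β) ∈ x} : Set Ω).ncard) '' {α | ∃ β, (α, β) ∈ x} = {1} := by
    refine eq_singleton_iff_nonempty_unique_mem.2 ⟨?_, ?_⟩
    · obtain ⟨⟨α, β⟩, hαβ⟩ := hne
      exact ⟨_, mem_image_of_mem _ (⟨β, hαβ⟩ : ∃ β, (α, β) ∈ x)⟩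
    · rintro n ⟨α, ⟨β, hβ⟩, rfl⟩
      simp only [hrow hβ, ncard_singleton]
  rw [valency, himg, csSup_singleton]

namespace CohCfg

variable {Ω : Type*} (X : CohCfg Ω)

def IsSaturated (B : Set (Ω × Ω)) : Prop := ∀ s ∈ X.S, (s ∩ B).Nonempty → s ⊆ B

lemma isSaturated_rdiag : X.IsSaturated (rdiag Ω) := X.diag_union

variable {X}

lemma subset_rdiag_of_isThick (hX : IsThick X) {x : Set (Ω × Ω)} (hx : x ∈ X.S)
    (h₁ : rcomp x (rconv x) ⊆ rdiag Ω) (h₂ : rcomp (rconv x) x ⊆ rdiag Ω) : x ⊆ rdiag Ω := by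
  by_contra hnd
  have hdisj : Disjoint x (rdiag Ω) :=
    disjoint_iff_inter_eq_empty.2 <| not_nonempty_iff_eq_empty.1 fun h => hnd (X.diag_union x hx h)
  obtain ⟨⟨α, β⟩, hαβ⟩ : x.Nonempty := nonempty_iff_ne_empty.2 fun h => X.empty_not_mem (h ▸ hx)
  exact hX x hx hdisj ⟨valency_eq_one ⟨_, hαβ⟩ h₂, valency_eq_one (x := rconv x) ⟨(β, α), hαβ⟩ h₁⟩

variable [Finite Ω]

lemma subset_rcomp_of_inter_nonempty {r s t : Set (Ω × Ω)} (hr : r ∈ X.S) (hs : s ∈ X.S)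
    (ht : t ∈ X.S) (h : (t ∩ rcomp r s).Nonempty) : t ⊆ rcomp r s := by
  obtain ⟨p, hpt, hprs⟩ := h
  intro q hqt
  have hpos : 0 < {γ : Ω | (p.1, γ) ∈ r ∧ (γ, p.2) ∈ s}.ncard :=
    (ncard_pos (toFinite _)).2 hprs
  rw [X.inter_const r hr s hs t ht p hpt q hqt] at hpos
  exact (ncard_pos (toFinite _)).1 hpos

lemma IsSaturated.rcomp {A B : Set (Ω × Ω)} (hA : X.IsSaturated A) (hB : X.IsSaturated B) :
    X.IsSaturated (rcomp A B) := by
  rintro s hs ⟨p, hps, γ, h1, h2⟩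
  obtain ⟨r, hr, hpr⟩ := X.cover (p.1, γ)
  obtain ⟨u, hu, hpu⟩ := X.cover (γ, p.2)
  exact (X.subset_rcomp_of_inter_nonempty hr hu hs ⟨p, hps, γ, hpr, hpu⟩).trans
    (rcomp_mono (hA r hr ⟨_, hpr, h1⟩) (hB u hu ⟨_, hpu, h2⟩))

lemma isSaturated_joinAll {F : Set (Set (Ω × Ω))} (hpar : ∀ f ∈ F, IsParabolic X f)
    (hcomm : ∀ f ∈ F, ∀ f' ∈ F, rcomp f f' = rcomp f' f) :
    X.IsSaturated (joinAll F) := by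
  refine Set.Finite.induction_on_subset (motive := fun t _ => X.IsSaturated (joinAll t))
    F (toFinite F) ?_ ?_
  · rw [joinAll_empty]
    exact X.isSaturated_rdiag
  · intro f t hf hts _ ih
    have hft : rcomp f (joinAll t) = rcomp (joinAll t) f :=
      rcomp_joinAll_comm (toFinite t) (fun f' hf' => (hpar f' (hts hf')).1)
        (fun f' hf' f'' hf'' => hcomm f' (hts hf') f'' (hts hf''))
        (fun f' hf' => hcomm f hf f' (hts hf'))
    rw [joinAll_insert (hpar f hf).1 hft.symm]
    exact ih.rcomp (hpar f hf).2

lemma rcomp_rconv_subset_rdiag_of_perp {e c B x : Set (Ω × Ω)} (he : IsEquivRel e)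
    (hc : IsParabolic X c) (hce : Perp X c e) (hB : X.IsSaturated B) (hBe : IsEquivRel B)
    (heB : e ∩ B ⊆ rdiag Ω) (hx : x ∈ X.S) (hxe : x ⊆ e) {α β : Ω} (hαβ : (α, β) ∈ x)
    (hαβB : (α, β) ∈ rcomp B c) : rcomp x (rconv x) ⊆ rdiag Ω := by
  obtain ⟨γ, hαγ, hγβ⟩ := hαβB
  obtain ⟨z, hz, hγβz⟩ := X.cover (γ, β)
  have hzc : z ⊆ c := hc.2 z hz ⟨_, hγβz, hγβ⟩
  have hx'e : rconv x ⊆ e := fun _ hp => he.symm (hxe hp)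
  have hv : rcomp z (rconv x) ∈ X.S :=
    hce z hz hzc _ (X.conv_mem x hx) hx'e ⟨(γ, α), β, hγβz, hαβ⟩
  have hvB : rcomp z (rconv x) ⊆ B := hB _ hv ⟨(γ, α), ⟨β, hγβz, hαβ⟩, hBe.symm hαγ⟩
  have hxvz : x ⊆ rcomp (rconv (rcomp z (rconv x))) z :=
    X.subset_rcomp_of_inter_nonempty (X.conv_mem _ hv) hz hx
      ⟨(α, β), hαβ, γ, ⟨β, hγβz, hαβ⟩, hγβz⟩
  rintro ⟨p, q⟩ ⟨μ, hpμ, hqμ⟩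
  obtain ⟨ν, hνp, hνμ⟩ := hxvz hpμ
  exact heB ⟨he.trans (hxe hpμ) (hx'e hqμ),
    hBe.trans (hBe.symm (hvB hνp)) (hvB ⟨μ, hνμ, hqμ⟩)⟩

lemma inter_rcomp_subset_rdiag (hX : IsThick X) {e c B : Set (Ω × Ω)} (he : IsParabolic X e)
    (hc : IsParabolic X c) (hce : Perp X c e) (hB : X.IsSaturated B) (hBe : IsEquivRel B)
    (hcB : rcomp B c = rcomp c B) (heB : e ∩ B ⊆ rdiag Ω) : e ∩ rcomp B c ⊆ rdiag Ω := by
  rintro ⟨α, β⟩ ⟨hαβe, hαβBc⟩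
  obtain ⟨x, hx, hαβx⟩ := X.cover (α, β)
  have hxe : x ⊆ e := he.2 x hx ⟨_, hαβx, hαβe⟩
  have hx'e : rconv x ⊆ e := fun _ hp => he.1.symm (hxe hp)
  have hβαBc : (β, α) ∈ rcomp B c := (hBe.rcomp_of_comm hc.1 hcB).symm hαβBc
  exact X.subset_rdiag_of_isThick hX hx
    (rcomp_rconv_subset_rdiag_of_perp he.1 hc hce hB hBe heB hx hxe hαβx hαβBc)
    (rcomp_rconv_subset_rdiag_of_perp he.1 hc hce hB hBe heB (X.conv_mem x hx) hx'e hαβx hβαBc)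
    hαβx

end CohCfg

/-- pairwise commuting, pairwise perpendicular parabolics of a thick
coherent configuration satisfy `e ∧ e' = 1_Ω`. -/
theorem stmt17 {Ω : Type*} [Fintype Ω] (X : CohCfg Ω) (hX : IsThick X)
    (Q : Set (Set (Ω × Ω)))
    (hpar : ∀ e ∈ Q, IsParabolic X e)
    (hcomm : ∀ e ∈ Q, ∀ f ∈ Q, rcomp e f = rcomp f e)
    (hperp : ∀ e ∈ Q, ∀ f ∈ Q, e ≠ f → Perp X e f) :
    ∀ e ∈ Q, e ∩ joinAll (Q \ {e}) = rdiag Ω := by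
  intro e he
  refine subset_antisymm ?_ fun p hp =>
    ⟨(hpar e he).1.rdiag_subset hp, (isEquivRel_eqvClosure _).rdiag_subset hp⟩
  refine Set.Finite.induction_on_subset (motive := fun t _ => e ∩ joinAll t ⊆ rdiag Ω)
    (Q \ {e}) (toFinite _) ?_ ?_
  · rw [joinAll_empty]
    exact inter_subset_right
  · intro c t hc hts _ ih
    have hpar_t : ∀ f ∈ t, IsParabolic X f := fun f hf => hpar f (hts hf).1
    have hcomm_t : ∀ f ∈ t, ∀ f' ∈ t, rcomp f f' = rcomp f' f :=
      fun f hf f' hf' => hcomm f (hts hf).1 f' (hts hf').1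
    have hct : rcomp (joinAll t) c = rcomp c (joinAll t) :=
      (rcomp_joinAll_comm (toFinite t) (fun f hf => (hpar_t f hf).1) hcomm_t
        fun f hf => hcomm c hc.1 f (hts hf).1).symm
    rw [joinAll_insert (hpar c hc.1).1 hct]
    exact X.inter_rcomp_subset_rdiag hX (hpar e he) (hpar c hc.1) (hperp c hc.1 e he hc.2)
      (X.isSaturated_joinAll hpar_t hcomm_t) (isEquivRel_eqvClosure _) hct ih
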